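/- arXiv:1911.07726 — 4 statements merged into one kernel-verified Lean document; each statement's English description precedes it below -/
import Mathlib

section
/- Let Γ be a finite nonempty set of tasks, and let L be a positive natural number (the hyper-period). For each task x ∈ Γ let e_x, p_x be natural numbers with 0 < e_x ≤ p_x and p_x dividing L, and let q_x : Fin L → ℝ be the probability that task x executes at each time slot, satisfying 0 ≤ q_x(t) ≤ 1 for all t and Σ_{t<L} q_x(t) = (L / p_x) · e_x (each task executes e_x time units per period in expectation). Then the schedule min-entropy H∞(S) := −log₂( max_{x∈Γ, t<L} q_x(t) ) satisfies H∞(S) ≤ −log₂( max_{x∈Γ} (e_x / p_x) ). Equivalently, the best-case probability of correctly guessing which task runs at some time slot is at least the largest task utilization. -/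
/-- **Schedule min-entropy upper bound.**
For a finite nonempty set of tasks with execution times `e x`, periods `p x`
(`0 < e x ≤ p x`, `p x ∣ L`), and per-slot execution probabilities
`q x t ∈ [0,1]` summing over the hyper-period to `(L / p x) * e x`,
the schedule min-entropy `-log₂(max_{x,t} q x t)` is at most
`-log₂(max_x (e x / p x))`. -/
theorem schedule_min_entropy_upper_bound
    {ι : Type*} [Fintype ι] [Nonempty ι]
    (L : ℕ) (hL : 0 < L) (e p : ι → ℕ)
    (he : ∀ x, 0 < e x) (hep : ∀ x, e x ≤ p x) (hpL : ∀ x, p x ∣ L)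
    (q : ι → Fin L → ℝ)
    (hq0 : ∀ x t, 0 ≤ q x t) (hq1 : ∀ x t, q x t ≤ 1)
    (hsum : ∀ x, ∑ t, q x t = ((L / p x : ℕ) : ℝ) * (e x : ℝ)) :
    -Real.logb 2 ((Finset.univ : Finset (ι × Fin L)).sup'
        ⟨(Classical.arbitrary ι, ⟨0, hL⟩), Finset.mem_univ _⟩
        (fun xt => q xt.1 xt.2))
      ≤ -Real.logb 2 ((Finset.univ : Finset ι).sup'
        ⟨Classical.arbitrary ι, Finset.mem_univ _⟩
        (fun x => (e x : ℝ) / (p x : ℝ))) := by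
  set M := (Finset.univ : Finset (ι × Fin L)).sup'
      ⟨(Classical.arbitrary ι, ⟨0, hL⟩), Finset.mem_univ _⟩
      (fun xt => q xt.1 xt.2) with hM
  set U := (Finset.univ : Finset ι).sup'
      ⟨Classical.arbitrary ι, Finset.mem_univ _⟩
      (fun x => (e x : ℝ) / (p x : ℝ)) with hU
  have hp0 : ∀ x, 0 < p x := fun x => lt_of_lt_of_le (he x) (hep x)
  have hUpos : 0 < U := by
    refine lt_of_lt_of_le ?_ (Finset.le_sup' _ (Finset.mem_univ (Classical.arbitrary ι)))
    exact div_pos (by exact_mod_cast he _) (by exact_mod_cast hp0 _)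
  have hUM : U ≤ M := by
    rw [hU]
    apply Finset.sup'_le
    intro x _
    have hcast : ((L / p x : ℕ) : ℝ) = (L : ℝ) / (p x : ℝ) :=
      Nat.cast_div (hpL x) (by exact_mod_cast (hp0 x).ne')
    have hsum' : ∑ t : Fin L, ((e x : ℝ) / (p x : ℝ)) ≤ ∑ t : Fin L, q x t := by
      rw [hsum x, hcast, Finset.sum_const, Finset.card_univ, Fintype.card_fin,
        nsmul_eq_mul]
      ring_nf
      exact le_refl _
    obtain ⟨t, ht⟩ := Finset.exists_le_of_sum_le
      (@Finset.univ_nonempty (Fin L) _ ⟨⟨0, hL⟩⟩) hsum'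
    exact le_trans ht.2 (Finset.le_sup' (fun xt : ι × Fin L => q xt.1 xt.2)
      (Finset.mem_univ (x, t)))
  have := Real.logb_le_logb_of_le (b := 2) one_lt_two hUpos hUM
  linarith
end

section
/- Let J be a finite index set. For each j ∈ J let e_j ∈ ℕ (worst-case execution time), p_j ∈ ℕ with p_j > 0 (period), o_j ∈ ℕ (offset of the earliest next release from the current time), and ẽ_j ∈ ℕ (residue execution at the current time). Let w ∈ ℕ (initial priority-inversion window) and o_h ∈ ℕ (offset of the earliest next arrival of task h). Define F : ℕ → ℕ by F(x) = w + Σ_{j∈J} ẽ_j + Σ_{j∈J} ⌈(x ∸ o_j) / p_j⌉ · e_j, where ∸ is truncated subtraction on ℕ and ⌈a/b⌉ denotes ceiling division (so the j-th summand is 0 whenever x ≤ o_j). Suppose F(o_h) ≤ o_h, i.e., w + Σ_j ẽ_j + Σ_j ⌈(o_h ∸ o_j)/p_j⌉ e_j ≤ o_h. Then the iteration W₀ = w + Σ_j ẽ_j, W_{k+1} = F(W_k) satisfies W_k ≤ o_h for every k, and there exists k ≤ o_h such that F(W_k) = W_k. In other words, the level-τ_h busy interval of initial size w starting at the current time converges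 and ends before or on the earliest next arrival of τ_h. -/
/-- Ceiling division of naturals: `⌈a / b⌉ = (a + b - 1) / b`. -/
def natCeilDiv (a b : ℕ) : ℕ := (a + b - 1) / b

lemma natCeilDiv_mono {a b c : ℕ} (h : a ≤ b) : natCeilDiv a c ≤ natCeilDiv b c :=
  Nat.div_le_div_right (by omega)

/-- **Busy-interval convergence before the next arrival (Theorem 2 core).**
If `F(o_h) ≤ o_h` for the busy-interval recurrence
`F(x) = w + Σ_j ẽ_j + Σ_j ⌈(x ∸ o_j)/p_j⌉ e_j`, then the iteration
`W₀ = w + Σ_j ẽ_j`, `W_{k+1} = F(W_k)` stays below `o_h` and reaches a fixed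
point within `o_h` steps: the busy interval ends before or on `τ_h`'s
earliest next arrival. -/
theorem busy_interval_ends_before_next_arrival
    {J : Type*} [Fintype J]
    (e p o er : J → ℕ) (hp : ∀ j, 0 < p j) (w oh : ℕ)
    (F : ℕ → ℕ)
    (hF : ∀ x, F x = w + ∑ j, er j + ∑ j, natCeilDiv (x - o j) (p j) * e j)
    (hFoh : F oh ≤ oh)
    (W : ℕ → ℕ)
    (hW0 : W 0 = w + ∑ j, er j)
    (hWs : ∀ k, W (k + 1) = F (W k)) :
    (∀ k, W k ≤ oh) ∧ ∃ k ≤ oh, F (W k) = W k := by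
  have hmono : ∀ x y, x ≤ y → F x ≤ F y := by
    intro x y hxy
    rw [hF, hF]
    refine Nat.add_le_add_left (Finset.sum_le_sum fun j _ => ?_) _
    exact Nat.mul_le_mul_right _ (natCeilDiv_mono (by omega))
  have hW0le : W 0 ≤ oh := by
    rw [hW0]
    calc w + ∑ j, er j ≤ F oh := by rw [hF]; omega
    _ ≤ oh := hFoh
  have hle : ∀ k, W k ≤ oh := by
    intro k
    induction k with
    | zero => exact hW0le
    | succ n ih =>
      rw [hWs]
      exact le_trans (hmono _ _ ih) hFoh
  refine ⟨hle, ?_⟩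
  have hstep : ∀ k, W k ≤ W (k + 1) := by
    intro k
    induction k with
    | zero => rw [hWs, hW0, hF]; omega
    | succ n ih => rw [hWs (n+1)]; rw [hWs n] at ih ⊢; exact hmono _ _ ih
  by_contra h
  push_neg at h
  have hstrict : ∀ k ≤ oh, W k < W (k + 1) := by
    intro k hk
    have := h k hk
    rw [← hWs] at this
    exact lt_of_le_of_ne (hstep k) (Ne.symm this)
  have hgrow : ∀ k, k ≤ oh + 1 → k ≤ W k := by
    intro k
    induction k with
    | zero => omega
    | succ n ih =>
      intro hn
      have h1 := ih (by omega)
      have h2 := hstrict n (by omega)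
      omega
  have := hgrow (oh + 1) le_rfl
  have := hle (oh + 1)
  omega
end

section
/- Let e, p, d, o ∈ ℕ with p > 0, and let k = ⌊(d ∸ o)/p⌋ (natural-number division, with ∸ truncated subtraction). Then k·e + min(e, d ∸ (o + k·p)) ≤ ⌈d/p⌉ · e. That is, the total interference within a window of length d caused by a periodic task with execution time e, period p, and first release at offset o into the window—consisting of k complete executions plus a partial final execution truncated at the end of the window—never exceeds the synchronous-release interference ⌈d/p⌉·e. -/
/-- **Offset interference is bounded by synchronous-release interference.**
A periodic task with execution time `e`, period `p > 0`, first released at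
offset `o` into a window of length `d`, contributes `k = ⌊(d ∸ o)/p⌋` complete
executions plus a final partial execution `min e (d ∸ (o + k·p))`, which never
exceeds the synchronous-release interference `⌈d/p⌉ · e`. -/
theorem offset_interference_le_synchronous
    (e p d o : ℕ) (hp : 0 < p) :
    ((d - o) / p) * e + min e (d - (o + ((d - o) / p) * p))
      ≤ natCeilDiv d p * e := by
  set k := (d - o) / p with hk
  by_cases h : d ≤ o + k * p
  · have h0 : d - (o + k * p) = 0 := Nat.sub_eq_zero_of_le h
    rw [h0]
    simp only [Nat.min_zero, Nat.add_zero]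
    have hk1 : k ≤ natCeilDiv d p := by
      have h1 : k ≤ d / p := Nat.div_le_div_right (Nat.sub_le d o)
      have h2 : d / p ≤ (d + p - 1) / p := Nat.div_le_div_right (by omega)
      exact h1.trans h2
    exact Nat.mul_le_mul_right e hk1
  · have hlt : o + k * p < d := lt_of_not_ge h
    have hk1 : k + 1 ≤ natCeilDiv d p := by
      rw [natCeilDiv, Nat.le_div_iff_mul_le hp]
      have h2 : k * p ≤ d - o := Nat.div_mul_le_self _ _
      have h3 : (k + 1) * p = k * p + p := by ring
      omega
    calc k * e + min e (d - (o + k * p)) ≤ k * e + e := by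
          gcongr; exact min_le_left _ _
      _ = (k + 1) * e := by ring
      _ ≤ natCeilDiv d p * e := Nat.mul_le_mul_right e hk1
end

section
/- Let J be a finite index set; for each j ∈ J let e_j, p_j, o_j, ẽ_j ∈ ℕ with p_j > 0, and let d, e ∈ ℕ. Define the interference bound I = Σ_{j∈J} ( ẽ_j + ⌊(d ∸ o_j)/p_j⌋ · e_j + min(e_j, d ∸ (o_j + ⌊(d ∸ o_j)/p_j⌋ · p_j)) ). If e + Σ_{j∈J} ẽ_j + Σ_{j∈J} ⌈d/p_j⌉ · e_j ≤ d, then e + I ≤ d; equivalently, the remaining inversion budget v = d − e − I is nonnegative. In words: if the task's execution time plus the residue executions of the higher-priority tasks plus their synchronous-release interference over a window of length d fit within the deadline d, then the deadline is met even under the offset-aware interference bound I, and the scheduler can grant up to v = d − e − I time units of priority inversion. -/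
lemma key_term_le (e' p o d : ℕ) (hp : 0 < p) :
    ((d - o) / p) * e' + min e' (d - (o + ((d - o) / p) * p)) ≤ natCeilDiv d p * e' := by
  set q := (d - o) / p with hq
  by_cases hc : d ≤ o + q * p
  · have : d - (o + q * p) = 0 := Nat.sub_eq_zero_of_le hc
    rw [this]
    simp only [Nat.min_zero, Nat.add_zero]
    apply Nat.mul_le_mul_right
    calc q ≤ d / p := Nat.div_le_div_right (Nat.sub_le d o)
    _ ≤ natCeilDiv d p := by
        unfold natCeilDiv
        apply Nat.div_le_div_right
        omega
  · push_neg at hc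
    have hqp : q * p < d := by omega
    have hq1 : q + 1 ≤ natCeilDiv d p := by
      unfold natCeilDiv
      rw [Nat.le_div_iff_mul_le hp]
      have : (q + 1) * p = q * p + p := by ring
      omega
    calc q * e' + min e' (d - (o + q * p)) ≤ q * e' + e' := by
          exact Nat.add_le_add_left (Nat.min_le_left _ _) _
    _ = (q + 1) * e' := by ring
    _ ≤ natCeilDiv d p * e' := Nat.mul_le_mul_right _ hq1

/-- **Nonnegativity of the remaining inversion budget (Theorem 3 core).**
If the task's execution time `e` plus the residue executions of the
higher-priority tasks plus their synchronous-release interference over a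
window of length `d` fit within `d`, then `e` plus the offset-aware
interference bound `I` also fits within `d` (so `v = d - e - I ≥ 0`). -/
theorem remaining_inversion_budget_nonneg
    {J : Type*} [Fintype J]
    (e' p o er : J → ℕ) (hp : ∀ j, 0 < p j) (d e : ℕ)
    (I : ℕ)
    (hI : I = ∑ j, (er j + ((d - o j) / p j) * e' j
        + min (e' j) (d - (o j + ((d - o j) / p j) * p j))))
    (h : e + ∑ j, er j + ∑ j, natCeilDiv d (p j) * e' j ≤ d) :
    e + I ≤ d := by
  subst hI
  calc e + ∑ j, (er j + ((d - o j) / p j) * e' j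
        + min (e' j) (d - (o j + ((d - o j) / p j) * p j)))
      ≤ e + ∑ j, (er j + natCeilDiv d (p j) * e' j) := by
        apply Nat.add_le_add_left
        apply Finset.sum_le_sum
        intro j _
        have := key_term_le (e' j) (p j) (o j) d (hp j)
        omega
    _ = e + ∑ j, er j + ∑ j, natCeilDiv d (p j) * e' j := by
        rw [Finset.sum_add_distrib]; ring
    _ ≤ d := h
end
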